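/- arXiv:0809.4106 — 4 statements merged into one kernel-verified Lean document; each statement's English description precedes it below -/
import Mathlib

section
/- Let Y and Z be bounded real random variables on a probability space, with Y measurable with respect to a σ-algebra 𝓕₁ and Z measurable with respect to a σ-algebra 𝓕₂, and suppose that for all A ∈ 𝓕₁ and B ∈ 𝓕₂ one has |P(A∩B) − P(A)P(B)| ≤ α. Then |E(YZ) − E(Y)E(Z)| ≤ 4α‖Y‖_∞‖Z‖_∞. -/
/-!
Conditioning on `𝓕₁` turns `cov(Y, Z)` into `E[Y (E[Z | 𝓕₁] - E Z)]`, which is at most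
`‖Y‖_∞ E|E[Z | 𝓕₁] - E Z| = 2 ‖Y‖_∞ cov(1_A, Z)` for the set `A = {E[Z | 𝓕₁] ≥ E Z} ∈ 𝓕₁`.
The same argument with `𝓕₂` bounds `cov(Z, 1_A)` by `2 ‖Z‖_∞ cov(1_B, 1_A)` for some `B ∈ 𝓕₂`,
and the covariance `μ(A ∩ B) - μ(A) μ(B)` of two indicators is at most `α`.
-/

open MeasureTheory ProbabilityTheory Set
open scoped ENNReal

section

variable {Ω : Type*} {m mΩ : MeasurableSpace Ω} {μ : Measure Ω} {f g : Ω → ℝ} {C : ℝ}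

lemma ae_abs_le_toReal_eLpNorm_top {D : ℝ} (hf : ∀ ω, |f ω| ≤ D) :
    ∀ᵐ ω ∂μ, |f ω| ≤ (eLpNorm f ⊤ μ).toReal := by
  have hfin : eLpNormEssSup f μ ≠ ⊤ :=
    (eLpNormEssSup_lt_top_of_ae_bound (C := D) (.of_forall hf)).ne
  filter_upwards [ae_le_eLpNormEssSup (f := f) (μ := μ)] with ω hω
  simpa [eLpNorm_exponent_top] using ENNReal.toReal_mono hfin hω

lemma abs_indicator_one_le_one (s : Set Ω) (ω : Ω) : |s.indicator (1 : Ω → ℝ) ω| ≤ 1 := by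
  simpa using norm_indicator_le_norm_self (s := s) (f := (1 : Ω → ℝ)) (a := ω)

variable [IsProbabilityMeasure μ]

lemma memLp_indicator_one {A : Set Ω} (hA : MeasurableSet A) (p : ℝ≥0∞) :
    MemLp (A.indicator (1 : Ω → ℝ)) p μ :=
  .of_bound (stronglyMeasurable_one.indicator hA).aestronglyMeasurable 1
    (.of_forall (abs_indicator_one_le_one A))

lemma integral_sub_integral_eq_zero (g : Ω → ℝ) : ∫ ω, (g ω - μ[g]) ∂μ = 0 := by
  simpa [average_eq_integral] using integral_sub_average μ g

lemma covariance_eq_integral_mul_sub (hf : AEStronglyMeasurable f μ)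
    (hfC : ∀ᵐ ω ∂μ, |f ω| ≤ C) (hg : Integrable g μ) :
    cov[f, g; μ] = ∫ ω, f ω * (g ω - μ[g]) ∂μ := by
  have hgc : Integrable (fun ω ↦ g ω - μ[g]) μ := hg.sub (integrable_const _)
  simp_rw [covariance, sub_mul]
  rw [integral_sub (hgc.bdd_mul hf hfC) (hgc.const_mul _), integral_const_mul,
    integral_sub_integral_eq_zero g, mul_zero, sub_zero]

lemma integral_mul_condExp (hm : m ≤ mΩ) (hf : StronglyMeasurable[m] f)
    (hfC : ∀ᵐ ω ∂μ, |f ω| ≤ C) (hg : Integrable g μ) :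
    ∫ ω, f ω * μ[g | m] ω ∂μ = ∫ ω, f ω * g ω ∂μ :=
  calc ∫ ω, f ω * μ[g | m] ω ∂μ = ∫ ω, μ[f * g | m] ω ∂μ :=
        integral_congr_ae (condExp_stronglyMeasurable_mul_of_bound hm hf hg C hfC).symm
    _ = ∫ ω, f ω * g ω ∂μ := integral_condExp hm

lemma covariance_condExp_right (hm : m ≤ mΩ) (hf : StronglyMeasurable[m] f)
    (hfC : ∀ᵐ ω ∂μ, |f ω| ≤ C) (hg : Integrable g μ) :
    cov[f, μ[g | m]; μ] = cov[f, g; μ] := by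
  have hf' : AEStronglyMeasurable f μ := (hf.mono hm).aestronglyMeasurable
  have hcondExp_sub : μ[fun ω ↦ g ω - μ[g] | m] =ᵐ[μ] fun ω ↦ μ[g | m] ω - μ[g] := by
    filter_upwards [condExp_sub hg (integrable_const (μ[g])) m] with ω hω
    exact hω.trans (by rw [Pi.sub_apply, condExp_const hm])
  rw [covariance_eq_integral_mul_sub hf' hfC integrable_condExp, integral_condExp hm,
    covariance_eq_integral_mul_sub hf' hfC hg,
    ← integral_mul_condExp (g := fun ω ↦ g ω - μ[g]) hm hf hfC (hg.sub (integrable_const _))]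
  exact integral_congr_ae (hcondExp_sub.mono fun ω hω ↦ by simp only [hω])

lemma abs_covariance_le_mul_integral_abs_sub (hf : AEStronglyMeasurable f μ)
    (hfC : ∀ᵐ ω ∂μ, |f ω| ≤ C) (hg : Integrable g μ) :
    |cov[f, g; μ]| ≤ C * ∫ ω, |g ω - μ[g]| ∂μ := by
  rw [covariance_eq_integral_mul_sub hf hfC hg, ← integral_const_mul C (fun ω ↦ |g ω - μ[g]|),
    ← Real.norm_eq_abs]
  refine norm_integral_le_of_norm_le ((hg.sub (integrable_const _)).abs.const_mul C) ?_
  filter_upwards [hfC] with ω hω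
  rw [Real.norm_eq_abs, abs_mul]
  exact mul_le_mul_of_nonneg_right hω (abs_nonneg _)

lemma integral_abs_sub_integral_eq_two_mul_covariance (hg : StronglyMeasurable g)
    (hgi : Integrable g μ) :
    ∫ ω, |g ω - μ[g]| ∂μ = 2 * cov[{ω | μ[g] ≤ g ω}.indicator 1, g; μ] := by
  set A := {ω | μ[g] ≤ g ω}
  have hA : MeasurableSet A := measurableSet_le measurable_const hg.measurable
  have hgc : Integrable (fun ω ↦ g ω - μ[g]) μ := hgi.sub (integrable_const _)
  have habs (ω : Ω) :
      |g ω - μ[g]| = 2 * (A.indicator 1 ω * (g ω - μ[g])) - (g ω - μ[g]) := by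
    by_cases hω : ω ∈ A
    · rw [indicator_of_mem hω, Pi.one_apply, abs_of_nonneg (sub_nonneg.2 hω)]
      ring
    · rw [indicator_of_notMem hω, abs_of_neg (sub_neg.2 (not_le.1 hω))]
      ring
  have hAm : AEStronglyMeasurable (A.indicator (1 : Ω → ℝ)) μ :=
    (memLp_indicator_one hA ⊤).aestronglyMeasurable
  have hAbound : ∀ᵐ ω ∂μ, |A.indicator (1 : Ω → ℝ) ω| ≤ 1 :=
    .of_forall (abs_indicator_one_le_one A)
  rw [covariance_eq_integral_mul_sub hAm hAbound hgi, integral_congr_ae (.of_forall habs),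
    integral_sub ((hgc.bdd_mul hAm hAbound).const_mul 2) hgc, integral_const_mul,
    integral_sub_integral_eq_zero g, sub_zero]

lemma exists_measurableSet_abs_covariance_le (hm : m ≤ mΩ) (hf : StronglyMeasurable[m] f)
    (hfC : ∀ᵐ ω ∂μ, |f ω| ≤ C) (hg : Integrable g μ) :
    ∃ A, MeasurableSet[m] A ∧ |cov[f, g; μ]| ≤ 2 * C * cov[A.indicator 1, g; μ] := by
  set W := μ[g | m]
  have hW : StronglyMeasurable[m] W := stronglyMeasurable_condExp
  set A := {ω | μ[W] ≤ W ω}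
  have hA : MeasurableSet[m] A :=
    measurableSet_le stronglyMeasurable_const.measurable hW.measurable
  refine ⟨A, hA, ?_⟩
  calc |cov[f, g; μ]| = |cov[f, W; μ]| := by rw [covariance_condExp_right hm hf hfC hg]
    _ ≤ C * ∫ ω, |W ω - μ[W]| ∂μ :=
        abs_covariance_le_mul_integral_abs_sub (hf.mono hm).aestronglyMeasurable hfC
          integrable_condExp
    _ = C * (2 * cov[A.indicator 1, W; μ]) := by
        rw [integral_abs_sub_integral_eq_two_mul_covariance (hW.mono hm) integrable_condExp]
    _ = 2 * C * cov[A.indicator 1, g; μ] := by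
        rw [covariance_condExp_right hm (stronglyMeasurable_one.indicator hA)
          (.of_forall (abs_indicator_one_le_one A)) hg]
        ring

lemma covariance_indicator_one {A B : Set Ω} (hA : MeasurableSet A) (hB : MeasurableSet B) :
    cov[A.indicator 1, B.indicator 1; μ] = μ.real (A ∩ B) - μ.real A * μ.real B := by
  rw [covariance_eq_sub (memLp_indicator_one hA 2) (memLp_indicator_one hB 2),
    ← inter_indicator_one, integral_indicator_one hA, integral_indicator_one hB,
    integral_indicator_one (hA.inter hB)]

end

theorem covariance_alpha_mixing_inequality
    {Ω : Type*} {m : MeasurableSpace Ω} {μ : Measure Ω} [IsProbabilityMeasure μ]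
    (𝓕₁ 𝓕₂ : MeasurableSpace Ω) (h₁ : 𝓕₁ ≤ m) (h₂ : 𝓕₂ ≤ m)
    (Y Z : Ω → ℝ) (D : ℝ)
    (hYm : Measurable[𝓕₁] Y) (hZm : Measurable[𝓕₂] Z)
    (hYb : ∀ ω, |Y ω| ≤ D) (hZb : ∀ ω, |Z ω| ≤ D)
    (α : ℝ)
    (hα : ∀ A B, MeasurableSet[𝓕₁] A → MeasurableSet[𝓕₂] B →
      |(μ (A ∩ B)).toReal - (μ A).toReal * (μ B).toReal| ≤ α) :
    |(∫ ω, Y ω * Z ω ∂μ) - (∫ ω, Y ω ∂μ) * ∫ ω, Z ω ∂μ| ≤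
      4 * α * (eLpNorm Y ⊤ μ).toReal * (eLpNorm Z ⊤ μ).toReal := by
  have hY : MemLp Y 2 μ := .of_bound (hYm.mono h₁ le_rfl).aestronglyMeasurable D (.of_forall hYb)
  have hZ : MemLp Z 2 μ := .of_bound (hZm.mono h₂ le_rfl).aestronglyMeasurable D (.of_forall hZb)
  obtain ⟨A, hA, hYA⟩ := exists_measurableSet_abs_covariance_le h₁ hYm.stronglyMeasurable
    (ae_abs_le_toReal_eLpNorm_top hYb) (hZ.integrable one_le_two)
  obtain ⟨B, hB, hZB⟩ := exists_measurableSet_abs_covariance_le (μ := μ) h₂ hZm.stronglyMeasurable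
    (ae_abs_le_toReal_eLpNorm_top hZb) ((memLp_indicator_one (h₁ A hA) 1).integrable le_rfl)
  have hmixing : cov[B.indicator 1, A.indicator 1; μ] ≤ α := by
    rw [covariance_indicator_one (h₂ B hB) (h₁ A hA), inter_comm, mul_comm]
    exact (le_abs_self _).trans (hα A B hA hB)
  calc |(∫ ω, Y ω * Z ω ∂μ) - (∫ ω, Y ω ∂μ) * ∫ ω, Z ω ∂μ|
      = |cov[Y, Z; μ]| := by rw [covariance_eq_sub hY hZ, Pi.mul_def]
    _ ≤ 2 * (eLpNorm Y ⊤ μ).toReal * cov[A.indicator 1, Z; μ] := hYA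
    _ ≤ 2 * (eLpNorm Y ⊤ μ).toReal * |cov[Z, A.indicator 1; μ]| := by
        rw [covariance_comm]; gcongr; exact le_abs_self _
    _ ≤ 2 * (eLpNorm Y ⊤ μ).toReal * (2 * (eLpNorm Z ⊤ μ).toReal * α) := by
        gcongr; exact hZB.trans (by gcongr)
    _ = 4 * α * (eLpNorm Y ⊤ μ).toReal * (eLpNorm Z ⊤ μ).toReal := by ring
end

section
/- Let q₂,...,q_ℓ : ℕ → ℕ satisfy q_j(n+1) ≥ q_j(n) + n^γ for all n ≥ n₀ and j = 2,...,ℓ, and q_{j+1}(⌊n^{1−γ}⌋) ≥ q_j(n)·n^γ for all n ≥ n₀ and j = 1,...,ℓ−1, where γ ∈ (0,1) and q₁(n) = rn + p with integers r > 0, p ≥ 0. Then for every j = 1,...,ℓ−1 and every n ≥ n₀, q_{j+1}(n) − q_j(n) ≥ n − ⌊n^{1−γ}⌋. -/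
/-!
Each `q j` grows by at least one per step beyond `n₀`, and by induction on `j` (via
`q (j+1) n₀ ≥ q j N * N^γ ≥ N`) also `q j n ≥ n`. Write `m = ⌊n^(1-γ)⌋`. If `m ≥ n₀`, then
`q (j+1) n ≥ q (j+1) m + (n - m) ≥ q j n * n^γ + (n - m)`. Otherwise pick `N > n` with
`⌊N^(1-γ)⌋ = n₀`; then `q (j+1) n ≥ q (j+1) n₀ ≥ (q j n + 1) N^γ`, and the excess
`q j n (N^γ - 1) ≥ n (n^γ - 1) ≥ n^(1-γ) (n^γ - 1) = n - n^(1-γ)` pays for `n - m`.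
-/

open Real

lemma add_le_add_of_add_one_le_succ {f : ℕ → ℕ} {n₀ a b : ℕ}
    (hf : ∀ n, n₀ ≤ n → f n + 1 ≤ f (n + 1)) (ha : n₀ ≤ a) (hab : a ≤ b) :
    f a + b ≤ f b + a := by
  induction b, hab using Nat.le_induction with
  | base => rfl
  | succ b hab ih => have := hf b (ha.trans hab); omega

lemma Real.sub_floor_rpow_one_sub_le {x γ : ℝ} (hx : 1 ≤ x) (hγ0 : 0 ≤ γ) :
    x - ⌊x ^ (1 - γ)⌋₊ ≤ x * (x ^ γ - 1) + 1 := by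
  have hsplit : x ^ γ * x ^ (1 - γ) = x := by
    rw [← rpow_add (by linarith)]
    norm_num
  have hle : x ^ (1 - γ) ≤ x := rpow_le_self_of_one_le hx (by linarith)
  have hone : 1 ≤ x ^ γ := one_le_rpow hx hγ0
  have hfloor : x ^ (1 - γ) < ⌊x ^ (1 - γ)⌋₊ + 1 := Nat.lt_floor_add_one _
  nlinarith [mul_le_mul_of_nonneg_right hle (sub_nonneg.2 hone)]

lemma exists_nat_floor_rpow_eq {s : ℝ} (hs0 : 0 < s) (hs1 : s ≤ 1) {k : ℕ} (hk : 1 ≤ k) :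
    ∃ N : ℕ, k ≤ N ∧ ⌊(N : ℝ) ^ s⌋₊ = k := by
  set x : ℝ := (k : ℝ) ^ s⁻¹
  have hk' : (1 : ℝ) ≤ k := by exact_mod_cast hk
  have hx0 : 0 ≤ x := by positivity
  have hxs : x ^ s = k := rpow_inv_rpow (by positivity) hs0.ne'
  have hxN : x ≤ ⌈x⌉₊ := Nat.le_ceil x
  refine ⟨⌈x⌉₊, ?_, ?_⟩
  · have hkx : (k : ℝ) ≤ x := self_le_rpow_of_one_le hk' (one_le_inv₀ hs0 |>.2 hs1)
    exact_mod_cast hkx.trans hxN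
  · rw [Nat.floor_eq_iff (by positivity)]
    constructor
    · exact hxs ▸ rpow_le_rpow hx0 hxN hs0.le
    · calc (⌈x⌉₊ : ℝ) ^ s < (x + 1) ^ s :=
            rpow_lt_rpow (by positivity) (Nat.ceil_lt_add_one hx0) hs0
        _ ≤ x ^ s + 1 ^ s := rpow_add_le_add_rpow hx0 zero_le_one hs0.le hs1
        _ = k + 1 := by rw [hxs, one_rpow]

section Gap

variable {f g : ℕ → ℕ} {γ : ℝ} {n₀ : ℕ}

lemma self_le_of_mul_rpow_le_floor (hγ0 : 0 ≤ γ) (hγ1 : γ < 1) (hn₀ : 1 ≤ n₀)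
    (hf : ∀ n, n₀ ≤ n → n ≤ f n) (hg : ∀ n, n₀ ≤ n → g n + 1 ≤ g (n + 1))
    (hfg : ∀ n, n₀ ≤ n → (f n : ℝ) * n ^ γ ≤ g ⌊(n : ℝ) ^ (1 - γ)⌋₊)
    {n : ℕ} (hn : n₀ ≤ n) : n ≤ g n := by
  obtain ⟨N, hNn₀, hN⟩ := exists_nat_floor_rpow_eq (s := 1 - γ) (by linarith) (by linarith) hn₀
  have hNγ : (1 : ℝ) ≤ (N : ℝ) ^ γ := one_le_rpow (by exact_mod_cast hn₀.trans hNn₀) hγ0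
  have hgN : (f N : ℝ) * N ^ γ ≤ g n₀ := hN ▸ hfg N hNn₀
  have hfN : (N : ℝ) ≤ f N := by exact_mod_cast hf N hNn₀
  have hgn₀ : n₀ ≤ g n₀ := by
    have : (n₀ : ℝ) ≤ g n₀ := by
      nlinarith [(Nat.cast_le (α := ℝ)).2 hNn₀,
        mul_le_mul_of_nonneg_left hNγ (Nat.cast_nonneg (f N))]
    exact_mod_cast this
  have := add_le_add_of_add_one_le_succ hg le_rfl hn
  omega

lemma sub_floor_rpow_le_sub (hγ0 : 0 ≤ γ) (hγ1 : γ < 1) (hn₀ : 1 ≤ n₀)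
    (hf : ∀ n, n₀ ≤ n → n ≤ f n)
    (hf1 : ∀ n, n₀ ≤ n → f n + 1 ≤ f (n + 1)) (hg : ∀ n, n₀ ≤ n → g n + 1 ≤ g (n + 1))
    (hfg : ∀ n, n₀ ≤ n → (f n : ℝ) * n ^ γ ≤ g ⌊(n : ℝ) ^ (1 - γ)⌋₊)
    {n : ℕ} (hn : n₀ ≤ n) : (n : ℝ) - ⌊(n : ℝ) ^ (1 - γ)⌋₊ ≤ g n - f n := by
  set m := ⌊(n : ℝ) ^ (1 - γ)⌋₊
  have hn1 : (1 : ℝ) ≤ n := by exact_mod_cast hn₀.trans hn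
  have hnγ : (1 : ℝ) ≤ (n : ℝ) ^ γ := one_le_rpow hn1 hγ0
  have hfn : (n : ℝ) ≤ f n := by exact_mod_cast hf n hn
  by_cases hm₀ : n₀ ≤ m
  · have hmn : m ≤ n := Nat.floor_le_of_le (rpow_le_self_of_one_le hn1 (by linarith))
    have hgm : (g m : ℝ) + n ≤ g n + m := by exact_mod_cast add_le_add_of_add_one_le_succ hg hm₀ hmn
    nlinarith [hfg n hn]
  · obtain ⟨N, hNn₀, hN⟩ := exists_nat_floor_rpow_eq (s := 1 - γ) (by linarith) (by linarith) hn₀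
    have hnN : n + 1 ≤ N := by
      by_contra! hNn
      have := Nat.floor_le_floor (R := ℝ) (rpow_le_rpow (Nat.cast_nonneg N)
        (Nat.cast_le.2 (Nat.lt_succ_iff.1 hNn)) (by linarith : (0 : ℝ) ≤ 1 - γ))
      omega
    have hγN : (n : ℝ) ^ γ ≤ (N : ℝ) ^ γ :=
      rpow_le_rpow (by positivity) (by exact_mod_cast (by omega : n ≤ N)) hγ0
    have hfN : (f n : ℝ) + 1 ≤ f N := by
      have := add_le_add_of_add_one_le_succ hf1 hn (by omega : n ≤ N)
      exact_mod_cast (by omega : f n + 1 ≤ f N)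
    have hgn : (g n₀ : ℝ) ≤ g n := by
      have := add_le_add_of_add_one_le_succ hg le_rfl hn
      exact_mod_cast (by omega : g n₀ ≤ g n)
    have hgN : (f N : ℝ) * N ^ γ ≤ g n₀ := hN ▸ hfg N hNn₀
    have hexcess : (n : ℝ) * ((n : ℝ) ^ γ - 1) ≤ f n * ((N : ℝ) ^ γ - 1) :=
      mul_le_mul hfn (by linarith) (by linarith) (Nat.cast_nonneg _)
    calc (n : ℝ) - m ≤ n * ((n : ℝ) ^ γ - 1) + 1 := Real.sub_floor_rpow_one_sub_le hn1 hγ0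
      _ ≤ f n * ((N : ℝ) ^ γ - 1) + (N : ℝ) ^ γ := by linarith
      _ = (f n + 1) * (N : ℝ) ^ γ - f n := by ring
      _ ≤ f N * (N : ℝ) ^ γ - f n := by gcongr
      _ ≤ g n - f n := by linarith

end Gap

/-- Inequality (3.11): under conditions (2.2)-(2.4) on the functions `q j`,
for `1 ≤ j ≤ ℓ - 1` and `n ≥ n₀` one has
`q (j+1) n - q j n ≥ n - ⌊n^(1-γ)⌋`. -/
theorem gap_lower_bound
    (ℓ : ℕ) (q : ℕ → ℕ → ℕ) (γ : ℝ) (hγ0 : 0 < γ) (hγ1 : γ < 1)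
    (r p n₀ : ℕ) (hr : 0 < r) (hn₀ : 1 < n₀)
    (hq1 : ∀ n, q 1 n = r * n + p)
    (h23 : ∀ j, 2 ≤ j → j ≤ ℓ → ∀ n, n₀ ≤ n →
      (q j n : ℝ) + (n : ℝ) ^ γ ≤ q j (n + 1))
    (h24 : ∀ j, 1 ≤ j → j ≤ ℓ - 1 → ∀ n, n₀ ≤ n →
      (q j n : ℝ) * (n : ℝ) ^ γ ≤ q (j + 1) (⌊(n : ℝ) ^ (1 - γ)⌋₊))
    (j n : ℕ) (hj : 1 ≤ j) (hjℓ : j ≤ ℓ - 1) (hn : n₀ ≤ n) :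
    (n : ℝ) - ⌊(n : ℝ) ^ (1 - γ)⌋₊ ≤ (q (j + 1) n : ℝ) - q j n := by
  have hstep : ∀ i, 1 ≤ i → i ≤ ℓ → ∀ n, n₀ ≤ n → q i n + 1 ≤ q i (n + 1) := by
    intro i hi hiℓ n hn
    rcases hi.eq_or_lt with rfl | hi
    · rw [hq1, hq1]
      nlinarith
    · have hnγ : (1 : ℝ) ≤ (n : ℝ) ^ γ := one_le_rpow (by exact_mod_cast (by omega : 1 ≤ n)) hγ0.le
      have := h23 i hi hiℓ n hn
      exact_mod_cast (by linarith : (q i n : ℝ) + 1 ≤ q i (n + 1))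
  have hself : ∀ i, 1 ≤ i → i ≤ ℓ → ∀ n, n₀ ≤ n → n ≤ q i n := by
    intro i hi
    induction i, hi using Nat.le_induction with
    | base => intro _ n _; rw [hq1]; nlinarith
    | succ i hi ih =>
      intro hiℓ n hn
      exact self_le_of_mul_rpow_le_floor hγ0.le hγ1 hn₀.le (ih (by omega))
        (hstep (i + 1) (by omega) hiℓ) (h24 i hi (by omega)) hn
  exact sub_floor_rpow_le_sub hγ0.le hγ1 hn₀.le (hself j hj (by omega)) (hstep j hj (by omega))
    (hstep (j + 1) (by omega) (by omega)) (h24 j hj hjℓ) hn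
end

section
/- Under the assumptions of Lemma 3.2 of the paper, the convergence (1/n)∑_{k=0}^n ∏_{j=1}^ℓ X_j(q_j(k)) → ∏_{j=1}^ℓ E X_j(0) holds almost surely, provided additionally the fourth moment bound E(∑_{k=m+1}^n R(k))⁴ ≤ C̃(n−m)² of Lemma 3.7 holds. -/
/-!
Put `S n = ∑_{k=1}^n R(k)`. The fourth moment bound gives `E (S n / n)^4 ≤ C̃ / n^2`, which is
summable, so `∑_n (S n / n)^4` has finite expectation. Hence it is finite almost surely, its terms
tend to zero, and `S n / n → 0` almost surely. The averages in the theorem are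
`∏_j E X_j(0) + S n / n + ∏_j X_j(q_j(0)) / n`.
-/

open MeasureTheory Finset Filter Topology

theorem tendsto_zero_of_tendsto_norm_pow {α E : Type*} [SeminormedAddCommGroup E]
    {l : Filter α} {f : α → E} {p : ℕ} (hp : p ≠ 0)
    (h : Tendsto (fun a => ‖f a‖ ^ p) l (𝓝 0)) : Tendsto f l (𝓝 0) := by
  rw [tendsto_zero_iff_norm_tendsto_zero]
  have hroot := h.rpow_const (p := (p : ℝ)⁻¹) (Or.inr (by positivity))
  rw [Real.zero_rpow (by positivity)] at hroot
  simpa only [Real.pow_rpow_inv_natCast (norm_nonneg _) hp] using hroot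

section MomentBorelCantelli

variable {Ω E : Type*} {m0 : MeasurableSpace Ω} {μ : Measure Ω} [NormedAddCommGroup E]

theorem ae_summable_norm_of_summable_integral_norm {ι : Type*} [Countable ι] {g : ι → Ω → E}
    (hg : ∀ i, Integrable (g i) μ) (hsum : Summable fun i => ∫ ω, ‖g i ω‖ ∂μ) :
    ∀ᵐ ω ∂μ, Summable fun i => ‖g i ω‖ := by
  refine summable_norm_of_tsum_eLpNorm_ne_top le_rfl (fun i => (hg i).aestronglyMeasurable) ?_
  simp_rw [eLpNorm_one_eq_lintegral_enorm, ← ofReal_integral_norm_eq_lintegral_enorm (hg _),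
    ← ENNReal.ofReal_tsum_of_nonneg (fun i => integral_nonneg fun ω => norm_nonneg _) hsum]
  exact ENNReal.ofReal_ne_top

theorem ae_tendsto_zero_of_summable_integral_norm_pow {f : ℕ → Ω → E} {p : ℕ} (hp : p ≠ 0)
    (hf : ∀ n, MemLp (f n) p μ) (hsum : Summable fun n => ∫ ω, ‖f n ω‖ ^ p ∂μ) :
    ∀ᵐ ω ∂μ, Tendsto (fun n => f n ω) atTop (𝓝 0) := by
  have hsum' : Summable fun n => ∫ ω, ‖‖f n ω‖ ^ p‖ ∂μ := by simpa using hsum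
  filter_upwards [ae_summable_norm_of_summable_integral_norm
    (fun n => (hf n).integrable_norm_pow hp) hsum'] with ω hω
  exact tendsto_zero_of_tendsto_norm_pow hp (by simpa using hω.tendsto_atTop_zero)

theorem ae_tendsto_div_of_integral_pow_four_le {S : ℕ → Ω → ℝ} {C : ℝ}
    (hS : ∀ n, MemLp (S n) 4 μ) (h4 : ∀ n : ℕ, ∫ ω, S n ω ^ 4 ∂μ ≤ C * (n : ℝ) ^ 2) :
    ∀ᵐ ω ∂μ, Tendsto (fun n : ℕ => S n ω / n) atTop (𝓝 0) := by
  have hSdiv : ∀ n : ℕ, MemLp (fun ω => S n ω / n) 4 μ := fun n => by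
    simpa only [div_eq_inv_mul] using (hS n).const_mul (n : ℝ)⁻¹
  have hmoment : ∀ n : ℕ, ∫ ω, ‖S n ω / n‖ ^ 4 ∂μ ≤ C / (n : ℝ) ^ 2 := by
    intro n
    obtain rfl | hn := eq_or_ne n 0
    · simp
    calc ∫ ω, ‖S n ω / n‖ ^ 4 ∂μ = (∫ ω, S n ω ^ 4 ∂μ) / (n : ℝ) ^ 4 := by
          simp_rw [Real.norm_eq_abs, (by decide : Even 4).pow_abs, div_pow, integral_div]
      _ ≤ C * (n : ℝ) ^ 2 / (n : ℝ) ^ 4 := by gcongr; exact h4 n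
      _ = C / (n : ℝ) ^ 2 := by field_simp
  have hsum : Summable fun n : ℕ => ∫ ω, ‖S n ω / n‖ ^ 4 ∂μ :=
    Summable.of_nonneg_of_le (fun n => integral_nonneg fun ω => by positivity) hmoment
      (by simpa [div_eq_mul_inv] using (Real.summable_nat_pow_inv.mpr one_lt_two).mul_left C)
  exact ae_tendsto_zero_of_summable_integral_norm_pow four_ne_zero hSdiv hsum

end MomentBorelCantelli

theorem tendsto_average_of_tendsto_sum_sub_div {a : ℕ → ℝ} {c : ℝ}
    (h : Tendsto (fun n : ℕ => (∑ k ∈ Ioc 0 n, (a k - c)) / n) atTop (𝓝 0)) :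
    Tendsto (fun n : ℕ => (1 / (n : ℝ)) * ∑ k ∈ range (n + 1), a k) atTop (𝓝 c) := by
  have hlim := ((tendsto_const_div_atTop_nhds_zero_nat (a 0)).add h).add_const c
  rw [zero_add, zero_add] at hlim
  refine hlim.congr' ?_
  filter_upwards [eventually_ne_atTop 0] with n hn
  have hsplit : ∑ k ∈ range (n + 1), a k = a 0 + ∑ k ∈ Ioc 0 n, (a k - c) + n * c := by
    rw [Nat.range_succ_eq_Icc_zero, Icc_eq_cons_Ioc (Nat.zero_le n), sum_cons,
      sum_sub_distrib, sum_const, Nat.card_Ioc, nsmul_eq_mul, Nat.sub_zero]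
    ring
  rw [hsplit]
  field_simp

theorem as_sum_product_ergodic_theorem_general
    {Ω : Type*} {m0 : MeasurableSpace Ω} {μ : Measure Ω} [IsProbabilityMeasure μ]
    (ℓ : ℕ)
    (X : ℕ → ℕ → Ω → ℝ) (D : ℝ)
    (hXmeas : ∀ j n, Measurable (X j n))
    (hXb : ∀ j n ω, |X j n ω| ≤ D)
    (q : ℕ → ℕ → ℕ)
    (Ctil : ℝ)
    -- fourth moment bound of Lemma 3.7
    (h4 : ∀ m n : ℕ, m ≤ n →
      ∫ ω, (∑ k ∈ Ioc m n,
          ((∏ j ∈ Icc 1 ℓ, X j (q j k) ω) - ∏ j ∈ Icc 1 ℓ, ∫ ω', X j 0 ω' ∂μ)) ^ 4 ∂μ ≤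
        Ctil * ((n : ℝ) - m) ^ 2) :
    ∀ᵐ ω ∂μ, Filter.Tendsto (fun n : ℕ =>
        (1 / (n : ℝ)) * ∑ k ∈ range (n + 1), ∏ j ∈ Icc 1 ℓ, X j (q j k) ω)
      Filter.atTop (nhds (∏ j ∈ Icc 1 ℓ, ∫ ω', X j 0 ω' ∂μ)) := by
  set c := ∏ j ∈ Icc 1 ℓ, ∫ ω', X j 0 ω' ∂μ
  set S : ℕ → Ω → ℝ := fun n ω => ∑ k ∈ Ioc 0 n, ((∏ j ∈ Icc 1 ℓ, X j (q j k) ω) - c)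
  have hX : ∀ j n, MemLp (X j n) ⊤ μ := fun j n =>
    memLp_top_of_bound (hXmeas j n).aestronglyMeasurable D (ae_of_all _ (hXb j n))
  have hprod : ∀ k, MemLp (fun ω => ∏ j ∈ Icc 1 ℓ, X j (q j k) ω) ⊤ μ := fun k => by
    simpa using MemLp.prod' (p := fun _ => ⊤) fun j _ => hX j (q j k)
  have hS : ∀ n, MemLp (S n) 4 μ := fun n =>
    (memLp_finsetSum _ fun k _ => (hprod k).sub (memLp_const c)).mono_exponent le_top
  filter_upwards [ae_tendsto_div_of_integral_pow_four_le hS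
    fun n => by simpa only [Nat.cast_zero, sub_zero] using h4 0 n n.zero_le] with ω hω
  exact tendsto_average_of_tendsto_sum_sub_div hω

/-- Remark 3.9: under the assumptions of Lemma 3.2, together with the fourth
moment bound of Lemma 3.7 on `R(n) = ∏_j X j (q j n) - ∏_j E (X j 0)`, the
averages `(1/n) ∑_{k=0}^n ∏_j X j (q j k)` converge almost surely to
`∏_j E (X j 0)`. -/
theorem as_sum_product_ergodic_theorem
    {Ω : Type*} {m0 : MeasurableSpace Ω} {μ : Measure Ω} [IsProbabilityMeasure μ]
    (F : WithBot ℤ → WithTop ℤ → MeasurableSpace Ω)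
    (hFle : ∀ k l, F k l ≤ m0)
    (hFmono : ∀ (k k' : WithBot ℤ) (l l' : WithTop ℤ), k' ≤ k → l ≤ l' → F k l ≤ F k' l')
    (ℓ : ℕ) (hℓ : 1 ≤ ℓ)
    (X : ℕ → ℕ → Ω → ℝ) (D : ℝ)
    (hXmeas : ∀ j n, Measurable (X j n))
    (hXb : ∀ j n ω, |X j n ω| ≤ D)
    -- stationarity of each process X j (equality of finite dimensional distributions)
    (hstat : ∀ j, 1 ≤ j → j ≤ ℓ → ∀ (s k : ℕ) (ns : Fin k → ℕ),
      μ.map (fun ω (i : Fin k) => X j (ns i + s) ω) =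
        μ.map (fun ω (i : Fin k) => X j (ns i) ω))
    (κ : ℝ) (hκ : 0 < κ)
    -- exponentially fast α-mixing (2.1)
    (hα : ∀ (k n : ℕ) (A B : Set Ω), MeasurableSet[F ⊥ (k : ℤ)] A →
      MeasurableSet[F ((k + n : ℕ) : ℤ) ⊤] B →
      |(μ (A ∩ B)).toReal - (μ A).toReal * (μ B).toReal| ≤ κ⁻¹ * Real.exp (-κ * n))
    (hβ : ∀ j, 1 ≤ j → j ≤ ℓ → ∀ (m n : ℕ),
      ∫ ω, |X j m ω - (μ[X j m| F ((m : ℤ) - (n : ℤ)) ((m : ℤ) + (n : ℤ))]) ω| ∂μ ≤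
        κ⁻¹ * Real.exp (-κ * n))
    (q : ℕ → ℕ → ℕ) (γ : ℝ) (hγ0 : 0 < γ) (hγ1 : γ < 1)
    (r p n₀ : ℕ) (hr : 0 < r) (hn₀ : 1 < n₀)
    -- condition (2.2)
    (hq1 : ∀ n, q 1 n = r * n + p)
    -- condition (2.3)
    (h23 : ∀ j, 2 ≤ j → j ≤ ℓ → ∀ n, n₀ ≤ n →
      (q j n : ℝ) + (n : ℝ) ^ γ ≤ q j (n + 1))
    -- condition (2.4)
    (h24 : ∀ j, 1 ≤ j → j ≤ ℓ - 1 → ∀ n, n₀ ≤ n →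
      (q j n : ℝ) * (n : ℝ) ^ γ ≤ q (j + 1) (⌊(n : ℝ) ^ (1 - γ)⌋₊))
    (Ctil : ℝ) (hCtil : 0 < Ctil)
    -- fourth moment bound of Lemma 3.7
    (h4 : ∀ m n : ℕ, m ≤ n →
      ∫ ω, (∑ k ∈ Ioc m n,
          ((∏ j ∈ Icc 1 ℓ, X j (q j k) ω) - ∏ j ∈ Icc 1 ℓ, ∫ ω', X j 0 ω' ∂μ)) ^ 4 ∂μ ≤
        Ctil * ((n : ℝ) - m) ^ 2) :
    ∀ᵐ ω ∂μ, Filter.Tendsto (fun n : ℕ =>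
        (1 / (n : ℝ)) * ∑ k ∈ range (n + 1), ∏ j ∈ Icc 1 ℓ, X j (q j k) ω)
      Filter.atTop (nhds (∏ j ∈ Icc 1 ℓ, ∫ ω', X j 0 ω' ∂μ)) :=
  as_sum_product_ergodic_theorem_general (m0 := m0) ℓ X D hXmeas hXb q Ctil h4
end

section
/- Let X(0), X(1), ... be i.i.d. bounded real random variables (|X(0)| ≤ D) and q₁,...,q_ℓ strictly increasing nonnegative integer-valued functions satisfying q_{j+1}(⌊n^γ⌋) > q_j(n) for n ≥ n₀ (γ ∈ (0,1)). Set S_N = ∑_{n=0}^N ∏_{j=1}^ℓ X(q_j(n)) and M_N(t) = E e^{tS_N}. Then for every real t the limit η(t) = lim_{N→∞}(1/N) log M_N(t) exists and equals log E exp(t ∏_{j=1}^ℓ X(q_j(m))) for any m ≥ ⌊n₀^γ⌋ (this value being independent of m). -/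
/-!
For `n ≥ ⌊n₀^γ⌋` the indices `q 1 n < ⋯ < q ℓ n` are distinct, and for `N ≥ n₀` the index blocks
`{q j n | j}` with `⌊N^γ⌋ ≤ n ≤ N` are pairwise disjoint: if `n < n'` then
`q j n' ≤ q j N < q (j+1) ⌊N^γ⌋ ≤ q (j+1) n`. Hence the summands `∏ j, X (q j n)` with
`⌊N^γ⌋ ≤ n ≤ N` are independent and identically distributed, so the moment generating function
of their sum is the `(N + 1 - ⌊N^γ⌋)`-th power of that of a single one. The remaining
`⌊N^γ⌋ = o(N)` summands are bounded by `D^ℓ` and move the cumulant generating function by at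
most `|t| D^ℓ ⌊N^γ⌋`, which disappears after division by `N`.
-/

open MeasureTheory ProbabilityTheory Finset Filter Topology Function Real

/-- Condition (5.6) of the paper is `IndexSeparated ℓ n₀ q (fun n ↦ ⌊n ^ γ⌋₊)`. -/
def IndexSeparated (ℓ n₀ : ℕ) (q : ℕ → ℕ → ℕ) (f : ℕ → ℕ) : Prop :=
  ∀ j, 1 ≤ j → j ≤ ℓ - 1 → ∀ n, n₀ ≤ n → q j n < q (j + 1) (f n)

namespace IndexSeparated

variable {ℓ n₀ : ℕ} {q : ℕ → ℕ → ℕ} {f : ℕ → ℕ}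

theorem apply_lt_apply_add_one (hsep : IndexSeparated ℓ n₀ q f)
    (hq : ∀ j, 1 ≤ j → j ≤ ℓ → StrictMono (q j)) (hf : ∀ n, f n ≤ n) {j n : ℕ} (hj : 1 ≤ j) (hjℓ : j < ℓ) (hn : f n₀ ≤ n) :
    q j n < q (j + 1) n := by
  have hsep' := hsep j hj (by omega)
  rcases le_total n₀ n with hn₀ | hn₀
  · exact (hsep' n hn₀).trans_le ((hq (j + 1) (by omega) hjℓ).monotone (hf n))
  · calc q j n ≤ q j n₀ := (hq j hj hjℓ.le).monotone hn₀
      _ < q (j + 1) (f n₀) := hsep' n₀ le_rfl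
      _ ≤ q (j + 1) n := (hq (j + 1) (by omega) hjℓ).monotone hn

theorem strictMonoOn (hsep : IndexSeparated ℓ n₀ q f)
    (hq : ∀ j, 1 ≤ j → j ≤ ℓ → StrictMono (q j)) (hf : ∀ n, f n ≤ n) {n : ℕ} (hn : f n₀ ≤ n) :
    StrictMonoOn (fun j ↦ q j n) (Set.Icc 1 ℓ) :=
  strictMonoOn_of_lt_add_one Set.ordConnected_Icc fun _ _ hj hj' ↦
    hsep.apply_lt_apply_add_one hq hf hj.1 hj'.2 hn

theorem apply_ne_apply_of_lt (hsep : IndexSeparated ℓ n₀ q f)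
    (hq : ∀ j, 1 ≤ j → j ≤ ℓ → StrictMono (q j))
    (hf : ∀ n, f n ≤ n) (hfm : Monotone f) {N n n' i j : ℕ} (hN : n₀ ≤ N) (hn : f N ≤ n)
    (hnn' : n < n') (hn'N : n' ≤ N) (hi : i ∈ Set.Icc 1 ℓ) (hj : j ∈ Set.Icc 1 ℓ) :
    q i n ≠ q j n' := by
  have hmono {k} (hk : n ≤ k) :=
    (hsep.strictMonoOn hq hf ((hfm hN).trans (hn.trans hk))).monotoneOn
  obtain ⟨hi1, hiℓ⟩ := hi
  obtain ⟨hj1, hjℓ⟩ := hj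
  rcases lt_or_ge j i with hji | hij
  · refine (calc q j n' ≤ q j N := (hq j hj1 hjℓ).monotone hn'N
      _ < q (j + 1) (f N) := hsep j hj1 (by omega) N hN
      _ ≤ q (j + 1) n := (hq (j + 1) (by omega) (by omega)).monotone hn
      _ ≤ q i n := hmono le_rfl ⟨by omega, by omega⟩ ⟨hi1, hiℓ⟩ hji).ne'
  · exact ((hq i hi1 hiℓ hnn').trans_le (hmono hnn'.le ⟨hi1, hiℓ⟩ ⟨hj1, hjℓ⟩ hij)).ne

theorem pairwiseDisjoint (hsep : IndexSeparated ℓ n₀ q f)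
    (hq : ∀ j, 1 ≤ j → j ≤ ℓ → StrictMono (q j)) (hf : ∀ n, f n ≤ n) (hfm : Monotone f)
    {N : ℕ} (hN : n₀ ≤ N) :
    (Ico (f N) (N + 1) : Set ℕ).PairwiseDisjoint fun n ↦ (Icc 1 ℓ).image fun j ↦ q j n := by
  have key {n n'} (hn : n ∈ Ico (f N) (N + 1)) (hn' : n' ∈ Ico (f N) (N + 1)) (hnn' : n < n') :
      Disjoint ((Icc 1 ℓ).image fun j ↦ q j n) ((Icc 1 ℓ).image fun j ↦ q j n') := by
    simp only [disjoint_left, mem_image, mem_Icc, not_exists, not_and]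
    rintro _ ⟨i, hi, rfl⟩ j hj
    exact (hsep.apply_ne_apply_of_lt hq hf hfm hN (mem_Ico.1 hn).1 hnn'
      (Nat.lt_succ_iff.1 (mem_Ico.1 hn').2) hi hj).symm
  intro n hn n' hn' hne
  rcases Nat.lt_or_gt_of_ne hne with h | h
  · exact key hn hn' h
  · exact (key hn' hn h).symm

end IndexSeparated

lemma floor_rpow_le_self {γ : ℝ} (hγ0 : 0 < γ) (hγ1 : γ ≤ 1) (n : ℕ) : ⌊(n : ℝ) ^ γ⌋₊ ≤ n := by
  rcases Nat.eq_zero_or_pos n with rfl | hn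
  · simp [zero_rpow hγ0.ne']
  · exact Nat.floor_le_of_le (rpow_le_self_of_one_le (by exact_mod_cast hn) hγ1)

lemma monotone_floor_rpow {γ : ℝ} (hγ : 0 ≤ γ) : Monotone fun n : ℕ ↦ ⌊(n : ℝ) ^ γ⌋₊ :=
  fun _ _ h ↦ Nat.floor_mono (rpow_le_rpow (Nat.cast_nonneg _) (by exact_mod_cast h) hγ)

lemma tendsto_floor_rpow_div_atTop {γ : ℝ} (hγ : γ < 1) :
    Tendsto (fun N : ℕ ↦ (⌊(N : ℝ) ^ γ⌋₊ : ℝ) / N) atTop (𝓝 0) := by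
  have hpow : Tendsto (fun N : ℕ ↦ (N : ℝ) ^ (γ - 1)) atTop (𝓝 0) := by
    simpa [comp_def] using (tendsto_rpow_neg_atTop (y := 1 - γ) (by linarith)).comp
      tendsto_natCast_atTop_atTop
  refine squeeze_zero' (Eventually.of_forall fun N ↦ by positivity) ?_ hpow
  filter_upwards [eventually_gt_atTop 0] with N hN
  have hN : (0 : ℝ) < N := by exact_mod_cast hN
  rw [div_le_iff₀ hN, rpow_sub_one hN.ne', div_mul_cancel₀ _ hN.ne']
  exact Nat.floor_le (by positivity)

lemma tendsto_inv_mul_of_abs_sub_le {u : ℕ → ℝ} {K : ℕ → ℕ} {a L : ℝ}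
    (hK : Tendsto (fun N ↦ (K N : ℝ) / N) atTop (𝓝 0))
    (hu : ∀ᶠ N in atTop, |u N - (N + 1 - K N) * L| ≤ a * K N) :
    Tendsto (fun N : ℕ ↦ 1 / (N : ℝ) * u N) atTop (𝓝 L) := by
  have herr : Tendsto (fun N : ℕ ↦ 1 / (N : ℝ) * (u N - (N + 1 - K N) * L)) atTop (𝓝 0) := by
    refine squeeze_zero_norm' ?_ (by simpa using hK.const_mul a)
    filter_upwards [hu] with N hN
    rw [norm_mul, norm_div, norm_one, Real.norm_natCast, Real.norm_eq_abs]
    calc 1 / (N : ℝ) * |u N - (N + 1 - K N) * L| ≤ 1 / N * (a * K N) := by gcongr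
      _ = a * (K N / N) := by ring
  have hmain : Tendsto (fun N : ℕ ↦ (1 + 1 / (N : ℝ) - K N / N) * L) atTop (𝓝 L) := by
    simpa using ((tendsto_const_nhds (x := (1 : ℝ)).add
      tendsto_one_div_atTop_nhds_zero_nat).sub hK).mul_const L
  refine (herr.add hmain).congr' ?_ |>.trans (by rw [zero_add])
  filter_upwards [eventually_gt_atTop 0] with N hN
  field_simp
  ring

namespace ProbabilityTheory

variable {Ω ι : Type*} {m0 : MeasurableSpace Ω} {μ : Measure Ω}

lemma abs_cgf_add_sub_cgf_le [IsProbabilityMeasure μ] {A B : Ω → ℝ} {b t : ℝ}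
    (hA : AEMeasurable A μ) (hAb : ∀ ω, |A ω| ≤ b) (hB : AEMeasurable B μ)
    (hBint : Integrable (fun ω ↦ exp (t * B ω)) μ) :
    |cgf (A + B) μ t - cgf B μ t| ≤ |t| * b := by
  have hexp : ∀ ω, exp (t * (A + B) ω) = exp (t * A ω) * exp (t * B ω) := fun ω ↦ by
    rw [Pi.add_apply, mul_add, exp_add]
  have htA : ∀ ω, |t * A ω| ≤ |t| * b := fun ω ↦ by
    rw [abs_mul]; exact mul_le_mul_of_nonneg_left (hAb ω) (abs_nonneg t)
  have hup : ∀ ω, exp (t * (A + B) ω) ≤ exp (|t| * b) * exp (t * B ω) := fun ω ↦ by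
    rw [hexp]
    exact mul_le_mul_of_nonneg_right (exp_le_exp.2 ((le_abs_self _).trans (htA ω))) (exp_pos _).le
  have hlo : ∀ ω, exp (-(|t| * b)) * exp (t * B ω) ≤ exp (t * (A + B) ω) := fun ω ↦ by
    rw [hexp]
    exact mul_le_mul_of_nonneg_right (exp_le_exp.2 (neg_le_of_abs_le (htA ω))) (exp_pos _).le
  have hint : Integrable (fun ω ↦ exp (t * (A + B) ω)) μ :=
    (hBint.const_mul _).mono' (aemeasurable_exp_mul t (hA.add hB))
      (ae_of_all _ fun ω ↦ by rw [norm_of_nonneg (exp_pos _).le]; exact hup ω)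
  have hmgf_pos := mgf_pos hBint
  have hmgf_up : mgf (A + B) μ t ≤ exp (|t| * b) * mgf B μ t := by
    rw [mgf, mgf, ← integral_const_mul]
    exact integral_mono hint (hBint.const_mul _) hup
  have hmgf_lo : exp (-(|t| * b)) * mgf B μ t ≤ mgf (A + B) μ t := by
    rw [mgf, mgf, ← integral_const_mul]
    exact integral_mono (hBint.const_mul _) hint hlo
  have hlog_up := log_le_log (mgf_pos hint) hmgf_up
  have hlog_lo := log_le_log (mul_pos (exp_pos _) hmgf_pos) hmgf_lo
  rw [log_mul (exp_pos _).ne' hmgf_pos.ne', log_exp] at hlog_up hlog_lo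
  rw [cgf, cgf, abs_sub_le_iff]
  constructor <;> linarith

lemma iIndepFun.indepFun_of_dependsOn {β : Type*} [MeasurableSpace β] [Nonempty β]
    {X : ι → Ω → β} (hX : iIndepFun X μ) (hXm : ∀ i, Measurable (X i))
    {S T : Finset ι} (hST : Disjoint S T) {f g : (ι → β) → ℝ}
    (hf : Measurable f) (hg : Measurable g) (hfS : DependsOn f S) (hgT : DependsOn g T) :
    IndepFun (fun ω ↦ f fun i ↦ X i ω) (fun ω ↦ g fun i ↦ X i ω) μ := by
  classical
  let x₀ : ι → β := fun _ ↦ Classical.arbitrary β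
  have hrestrict {h : (ι → β) → ℝ} {U : Finset ι} (hU : DependsOn h U) :
      (fun ω ↦ h fun i ↦ X i ω) = (fun u ↦ h (updateFinset x₀ U u)) ∘ fun ω (i : U) ↦ X i ω := by
    ext ω
    exact hU fun i hi ↦ by simp [updateFinset, Finset.mem_coe.1 hi]
  rw [hrestrict hfS, hrestrict hgT]
  exact (hX.indepFun_finset S T hST hXm).comp (hf.comp measurable_updateFinset)
    (hg.comp measurable_updateFinset)

theorem iIndepFun.mgf_sum_of_dependsOn {κ β : Type*} [MeasurableSpace β] [Nonempty β]
    {X : ι → Ω → β} (hX : iIndepFun X μ) (hXm : ∀ i, Measurable (X i))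
    {B : κ → Finset ι} {F : κ → (ι → β) → ℝ} (hF : ∀ n, Measurable (F n))
    (hFB : ∀ n, DependsOn (F n) (B n)) {s : Finset κ} (hs : (s : Set κ).PairwiseDisjoint B)
    (t : ℝ) :
    mgf (∑ n ∈ s, fun ω ↦ F n fun i ↦ X i ω) μ t =
      ∏ n ∈ s, mgf (fun ω ↦ F n fun i ↦ X i ω) μ t := by
  classical
  have := hX.isProbabilityMeasure
  have hV : Measurable fun ω i ↦ X i ω := measurable_pi_lambda _ hXm
  induction s using Finset.induction_on with
  | empty => simp
  | insert a s ha ih =>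
    rw [coe_insert] at hs
    have hdisj : Disjoint (B a) (s.biUnion B) := (disjoint_biUnion_right _ _ _).2 fun n hn ↦
      hs (Set.mem_insert a _) (Set.mem_insert_of_mem a hn) (ne_of_mem_of_not_mem hn ha).symm
    have hsum : DependsOn (fun v ↦ ∑ n ∈ s, F n v) (s.biUnion B) := fun v w hvw ↦
      sum_congr rfl fun n hn ↦ hFB n fun i hi ↦ hvw i (by simpa using ⟨n, hn, hi⟩)
    have hindep := hX.indepFun_of_dependsOn hXm hdisj (hF a)
      (Finset.measurable_sum s fun n _ ↦ hF n) (hFB a) hsum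
    rw [sum_insert ha, prod_insert ha, ← ih (hs.subset (Set.subset_insert a _)), sum_fn s]
    exact hindep.mgf_add' ((hF a).comp hV).aestronglyMeasurable
      ((Finset.measurable_sum s fun n _ ↦ hF n).comp hV).aestronglyMeasurable

lemma iIndepFun.identDistrib_pi_of_injective {κ β : Type*} [Fintype κ] [MeasurableSpace β]
    {X : ι → Ω → β} (hX : iIndepFun X μ) (hXm : ∀ i, Measurable (X i))
    (hident : ∀ i j, IdentDistrib (X i) (X j) μ μ) {σ τ : κ → ι} (hσ : Injective σ)
    (hτ : Injective τ) :
    IdentDistrib (fun ω k ↦ X (σ k) ω) (fun ω k ↦ X (τ k) ω) μ μ := by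
  have := hX.isProbabilityMeasure
  refine ⟨(measurable_pi_lambda _ fun k ↦ hXm _).aemeasurable,
    (measurable_pi_lambda _ fun k ↦ hXm _).aemeasurable, ?_⟩
  rw [(hX.precomp hσ).map_fun_eq_pi_map fun k ↦ (hXm _).aemeasurable,
    (hX.precomp hτ).map_fun_eq_pi_map fun k ↦ (hXm _).aemeasurable]
  exact congrArg _ (funext fun k ↦ (hident _ _).map_eq)

lemma iIndepFun.identDistrib_prod_of_injOn {κ : Type*} {X : ι → Ω → ℝ} (hX : iIndepFun X μ)
    (hXm : ∀ i, Measurable (X i)) (hident : ∀ i j, IdentDistrib (X i) (X j) μ μ)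
    {J : Finset κ} {σ τ : κ → ι} (hσ : Set.InjOn σ J) (hτ : Set.InjOn τ J) :
    IdentDistrib (fun ω ↦ ∏ j ∈ J, X (σ j) ω) (fun ω ↦ ∏ j ∈ J, X (τ j) ω) μ μ := by
  have h := (hX.identDistrib_pi_of_injective hXm hident hσ.injective hτ.injective).comp
    (u := fun v ↦ ∏ j, v j) (Finset.measurable_prod _ fun j _ ↦ measurable_pi_apply j)
  convert h using 2 with ω ω
  · exact (prod_finset_coe (fun j ↦ X (σ j) ω) J).symm
  · exact (prod_finset_coe (fun j ↦ X (τ j) ω) J).symm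

lemma abs_cgf_sum_range_sub_cgf_sum_Ico_le [IsProbabilityMeasure μ] {Y : ℕ → Ω → ℝ} {C : ℝ}
    (hYm : ∀ n, Measurable (Y n)) (hYb : ∀ n ω, |Y n ω| ≤ C) {K N : ℕ} (hKN : K ≤ N) (t : ℝ) :
    |cgf (∑ n ∈ range N, Y n) μ t - cgf (∑ n ∈ Ico K N, Y n) μ t| ≤ |t| * (K * C) := by
  have hsum_le (s : Finset ℕ) (ω : Ω) : |(∑ n ∈ s, Y n) ω| ≤ #s * C := by
    rw [Finset.sum_apply, ← nsmul_eq_mul]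
    exact (abs_sum_le_sum_abs _ _).trans (sum_le_card_nsmul _ _ _ fun n _ ↦ hYb n ω)
  have hsum_meas (s : Finset ℕ) : AEMeasurable (∑ n ∈ s, Y n) μ :=
    Finset.aemeasurable_sum s fun n _ ↦ (hYm n).aemeasurable
  rw [← sum_range_add_sum_Ico Y hKN]
  refine abs_cgf_add_sub_cgf_le (hsum_meas _) (by simpa using hsum_le (range K)) (hsum_meas _)
    (integrable_exp_mul_of_mem_Icc (hsum_meas _) (ae_of_all _ fun ω ↦ abs_le.1 (hsum_le _ ω)))

end ProbabilityTheory

theorem splad_limit_log_mgf_general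
    {Ω : Type*} {m0 : MeasurableSpace Ω} {μ : Measure Ω} [IsProbabilityMeasure μ]
    (X : ℕ → Ω → ℝ) (hXmeas : ∀ n, Measurable (X n)) (D : ℝ)
    (hXb : ∀ n ω, |X n ω| ≤ D)
    (hindep : iIndepFun X μ)
    (hident : ∀ n, μ.map (X n) = μ.map (X 0))
    (ℓ : ℕ) (q : ℕ → ℕ → ℕ)
    (hqmono : ∀ j, 1 ≤ j → j ≤ ℓ → StrictMono (q j))
    (γ : ℝ) (hγ0 : 0 < γ) (hγ1 : γ < 1) (n₀ : ℕ)
    -- condition (5.6)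
    (h56 : ∀ j, 1 ≤ j → j ≤ ℓ - 1 → ∀ n, n₀ ≤ n →
      q j n < q (j + 1) (⌊(n : ℝ) ^ γ⌋₊)) :
    ∀ t : ℝ, ∀ m : ℕ, ⌊(n₀ : ℝ) ^ γ⌋₊ ≤ m →
      Filter.Tendsto (fun N : ℕ => (1 / (N : ℝ)) *
          Real.log (∫ ω, Real.exp (t * ∑ n ∈ range (N + 1),
            ∏ j ∈ Icc 1 ℓ, X (q j n) ω) ∂μ))
        Filter.atTop
        (nhds (Real.log (∫ ω, Real.exp (t * ∏ j ∈ Icc 1 ℓ, X (q j m) ω) ∂μ))) := by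
  intro t m hm
  set f : ℕ → ℕ := fun n ↦ ⌊(n : ℝ) ^ γ⌋₊
  have hsep : IndexSeparated ℓ n₀ q f := h56
  have hf : ∀ n, f n ≤ n := floor_rpow_le_self hγ0 hγ1.le
  have hfm : Monotone f := monotone_floor_rpow hγ0.le
  set Y : ℕ → Ω → ℝ := fun n ω ↦ ∏ j ∈ Icc 1 ℓ, X (q j n) ω
  have hYm (n : ℕ) : Measurable (Y n) := Finset.measurable_prod _ fun j _ ↦ hXmeas _
  have hYb (n : ℕ) (ω : Ω) : |Y n ω| ≤ D ^ ℓ := by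
    calc |Y n ω| = ∏ j ∈ Icc 1 ℓ, |X (q j n) ω| := abs_prod _ _
      _ ≤ ∏ j ∈ Icc 1 ℓ, D := prod_le_prod (fun j _ ↦ abs_nonneg _) fun j _ ↦ hXb (q j n) ω
      _ = D ^ ℓ := by simp
  have hiid (i j : ℕ) : IdentDistrib (X i) (X j) μ μ :=
    ⟨(hXmeas i).aemeasurable, (hXmeas j).aemeasurable, (hident i).trans (hident j).symm⟩
  have hinj {n : ℕ} (hn : f n₀ ≤ n) : Set.InjOn (fun j ↦ q j n) ↑(Icc 1 ℓ) := by
    simpa using (hsep.strictMonoOn hqmono hf hn).injOn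
  have hmgf_eq {n : ℕ} (hn : f n₀ ≤ n) : mgf (Y n) μ t = mgf (Y m) μ t :=
    mgf_congr_of_identDistrib _ _
      (hindep.identDistrib_prod_of_injOn hXmeas hiid (hinj hn) (hinj hm)) t
  have hmgf_tail {N : ℕ} (hN : n₀ ≤ N) :
      mgf (∑ n ∈ Ico (f N) (N + 1), Y n) μ t = mgf (Y m) μ t ^ (N + 1 - f N) := by
    rw [hindep.mgf_sum_of_dependsOn hXmeas (F := fun n v ↦ ∏ j ∈ Icc 1 ℓ, v (q j n))
      (fun n ↦ Finset.measurable_prod _ fun j _ ↦ measurable_pi_apply _)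
      (fun n v w hvw ↦ prod_congr rfl fun j hj ↦ hvw _ (mem_image_of_mem _ hj))
      (hsep.pairwiseDisjoint hqmono hf hfm hN),
      prod_congr rfl fun n hn ↦ hmgf_eq ((hfm hN).trans (mem_Ico.1 hn).1), prod_const,
      Nat.card_Ico]
  have hcgf : ∀ᶠ N in atTop, |cgf (∑ n ∈ range (N + 1), Y n) μ t
      - (N + 1 - f N) * cgf (Y m) μ t| ≤ |t| * D ^ ℓ * f N := by
    filter_upwards [eventually_ge_atTop n₀] with N hN
    have hfN : f N ≤ N + 1 := (hf N).trans N.le_succ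
    have h := abs_cgf_sum_range_sub_cgf_sum_Ico_le (μ := μ) hYm hYb hfN t
    have htail : cgf (∑ n ∈ Ico (f N) (N + 1), Y n) μ t = (N + 1 - f N) * cgf (Y m) μ t := by
      rw [cgf, hmgf_tail hN, log_pow, Nat.cast_sub hfN, cgf]
      push_cast; ring
    rw [htail] at h
    linarith
  simpa only [cgf, mgf, Finset.sum_apply, Y] using
    tendsto_inv_mul_of_abs_sub_le (tendsto_floor_rpow_div_atTop hγ1) hcgf

/-- (5.12)-(5.14): for i.i.d. bounded `X` and strictly increasing `q j`
satisfying condition (5.6), the limit `η(t) = lim (1/N) log E e^{t S_N}` exists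
for every `t`, where `S_N = ∑_{n=0}^N ∏_j X (q j n)`, and equals
`log E exp(t ∏_j X (q j m))` for every `m ≥ ⌊n₀^γ⌋`. -/
theorem splad_limit_log_mgf
    {Ω : Type*} {m0 : MeasurableSpace Ω} {μ : Measure Ω} [IsProbabilityMeasure μ]
    (X : ℕ → Ω → ℝ) (hXmeas : ∀ n, Measurable (X n)) (D : ℝ)
    (hXb : ∀ n ω, |X n ω| ≤ D)
    (hindep : iIndepFun X μ)
    (hident : ∀ n, μ.map (X n) = μ.map (X 0))
    (ℓ : ℕ) (hℓ : 1 ≤ ℓ) (q : ℕ → ℕ → ℕ)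
    (hqmono : ∀ j, 1 ≤ j → j ≤ ℓ → StrictMono (q j))
    (γ : ℝ) (hγ0 : 0 < γ) (hγ1 : γ < 1) (n₀ : ℕ)
    -- condition (5.6)
    (h56 : ∀ j, 1 ≤ j → j ≤ ℓ - 1 → ∀ n, n₀ ≤ n →
      q j n < q (j + 1) (⌊(n : ℝ) ^ γ⌋₊)) :
    ∀ t : ℝ, ∀ m : ℕ, ⌊(n₀ : ℝ) ^ γ⌋₊ ≤ m →
      Filter.Tendsto (fun N : ℕ => (1 / (N : ℝ)) *
          Real.log (∫ ω, Real.exp (t * ∑ n ∈ range (N + 1),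
            ∏ j ∈ Icc 1 ℓ, X (q j n) ω) ∂μ))
        Filter.atTop
        (nhds (Real.log (∫ ω, Real.exp (t * ∏ j ∈ Icc 1 ℓ, X (q j m) ω) ∂μ))) :=
  splad_limit_log_mgf_general (m0 := m0) X hXmeas D hXb hindep hident ℓ q hqmono γ hγ0 hγ1 n₀ h56
end
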